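/- For every finite graph G and every maximum matching M of G, the restriction of M to the subgraph induced on C(G) is a perfect matching of that subgraph (i.e., every vertex of C(G) is matched by M to another vertex of C(G)). -/

import Mathlib

/-- A maximum matching of `G`: a matching with the greatest possible number of
edges. -/
def IsMaximumMatching {V : Type*} (G : SimpleGraph V) (M : G.Subgraph) : Prop :=
  M.IsMatching ∧ ∀ M' : G.Subgraph, M'.IsMatching → M'.edgeSet.ncard ≤ M.edgeSet.ncard

/-- `D(G)`: the set of vertices left unmatched by some maximum matching of `G`. -/
def Dset {V : Type*} (G : SimpleGraph V) : Set V :=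
  {v | ∃ M : G.Subgraph, IsMaximumMatching G M ∧ v ∉ M.verts}

/-- `A(G)`: the set of vertices not in `D(G)` having a neighbor in `D(G)`. -/
def Aset {V : Type*} (G : SimpleGraph V) : Set V :=
  {v | v ∉ Dset G ∧ ∃ w ∈ Dset G, G.Adj v w}

/-- `C(G) = V(G) \ (D(G) ∪ A(G))`. -/
def Cset {V : Type*} (G : SimpleGraph V) : Set V :=
  (Dset G ∪ Aset G)ᶜ

/-! Let `v ∈ C(G)` be matched by `M` to `w`. Then `w ∉ D(G)`, for otherwise `v ∈ A(G)`.
Suppose `w` had a neighbour `u ∈ D(G)`, missed by a maximum matching `N`. Flipping the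
`M`-`N` alternating path that starts at `u` one edge pair at a time (induction on `|M \ N|`)
yields a maximum matching that misses `u` and still contains every `M`-edge with both ends
outside `D(G)`, in particular `vw`. Trading `vw` for `uw` then leaves `v` unmatched by a
maximum matching, i.e. `v ∈ D(G)`, a contradiction. -/

open SimpleGraph Subgraph

section

variable {V : Type*} {G : SimpleGraph V}

namespace SimpleGraph.Subgraph

lemma IsMatching.deleteVerts_pair {M : G.Subgraph} (hM : M.IsMatching) {a b : V}
    (hab : M.Adj a b) : (M.deleteVerts {a, b}).IsMatching := by
  rintro v ⟨hvM, hvab⟩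
  obtain ⟨p, hp, hpu⟩ := hM hvM
  refine ⟨p, deleteVerts_adj.mpr ⟨hvM, hvab, hp.snd_mem, ?_, hp⟩,
    fun q hq => hpu q (deleteVerts_adj.mp hq).2.2.2.2⟩
  rintro (rfl | rfl)
  · exact hvab (Or.inr (hM.eq_of_adj_left hab hp.symm).symm)
  · exact hvab (Or.inl (hM.eq_of_adj_right hab hp).symm)

lemma IsMatching.edgeSet_deleteVerts_pair {M : G.Subgraph} (hM : M.IsMatching) {a b : V}
    (hab : M.Adj a b) : (M.deleteVerts {a, b}).edgeSet = M.edgeSet \ {s(a, b)} := by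
  ext e
  induction e using Sym2.ind with | _ p q =>
  simp only [Subgraph.mem_edgeSet, deleteVerts_adj, Set.mem_sdiff, Set.mem_singleton_iff,
    Sym2.eq_iff, Set.mem_insert_iff]
  constructor
  · rintro ⟨-, hp, -, hq, hpq⟩
    exact ⟨hpq, by tauto⟩
  · rintro ⟨hpq, hne⟩
    refine ⟨hpq.fst_mem, ?_, hpq.snd_mem, ?_, hpq⟩ <;> rintro (rfl | rfl)
    · exact hne (.inl ⟨rfl, (hM.eq_of_adj_left hab hpq).symm⟩)
    · exact hne (.inr ⟨rfl, (hM.eq_of_adj_left hab.symm hpq).symm⟩)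
    · exact hne (.inr ⟨(hM.eq_of_adj_right hab.symm hpq).symm, rfl⟩)
    · exact hne (.inl ⟨(hM.eq_of_adj_right hab hpq).symm, rfl⟩)

lemma IsMatching.sup_subgraphOfAdj {M : G.Subgraph} (hM : M.IsMatching) {x y : V}
    (hx : x ∉ M.verts) (hy : y ∉ M.verts) (hxy : G.Adj x y) :
    (M ⊔ G.subgraphOfAdj hxy).IsMatching := by
  refine hM.sup (.subgraphOfAdj hxy) ?_
  rw [hM.support_eq_verts, (IsMatching.subgraphOfAdj hxy).support_eq_verts, subgraphOfAdj_verts]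
  simp [hx, hy]

lemma ncard_edgeSet_sup_subgraphOfAdj [Finite V] {M : G.Subgraph} {x y : V}
    (hx : x ∉ M.verts) (hxy : G.Adj x y) :
    (M ⊔ G.subgraphOfAdj hxy).edgeSet.ncard = M.edgeSet.ncard + 1 := by
  rw [edgeSet_sup, edgeSet_subgraphOfAdj, Set.union_singleton,
    Set.ncard_insert_of_notMem fun h => hx (M.mem_edgeSet.mp h).fst_mem]

lemma IsMatching.ncard_sdiff_edgeSet_exchange_lt [Finite V] {M N : G.Subgraph}
    (hM : M.IsMatching) (hN : N.IsMatching) {u u₁ u₂ : V} (hu₁ : M.Adj u u₁)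
    (hu₂ : N.Adj u₁ u₂) (huN : u ∉ N.verts) :
    (M.edgeSet \ (N.deleteVerts {u₁, u₂} ⊔ G.subgraphOfAdj hu₁.adj_sub).edgeSet).ncard <
      (M.edgeSet \ N.edgeSet).ncard := by
  refine Set.ncard_lt_ncard ((Set.ssubset_iff_of_subset ?_).mpr
    ⟨s(u, u₁), ⟨hu₁, fun h => huN h.fst_mem⟩, fun h => h.2 (by simp [edgeSet_sup])⟩)
  rintro e ⟨heM, heN'⟩
  refine ⟨heM, fun heN => heN' ?_⟩
  rw [edgeSet_sup, hN.edgeSet_deleteVerts_pair hu₂]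
  refine .inl ⟨heN, ?_⟩
  rintro rfl
  exact huN (hM.eq_of_adj_left (M.mem_edgeSet.mp heM) hu₁.symm ▸ hu₂.snd_mem)

end SimpleGraph.Subgraph

namespace IsMaximumMatching

variable [Finite V] {N : G.Subgraph}

lemma mem_verts_of_adj (hN : IsMaximumMatching G N) {x y : V} (hx : x ∉ N.verts)
    (hxy : G.Adj x y) : y ∈ N.verts := by
  by_contra hy
  have := hN.2 _ (hN.1.sup_subgraphOfAdj hx hy hxy)
  rw [ncard_edgeSet_sup_subgraphOfAdj hx hxy] at this
  omega

lemma exchange (hN : IsMaximumMatching G N) {a b c : V} (hab : N.Adj a b) (hc : c ∉ N.verts)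
    (hca : G.Adj c a) : IsMaximumMatching G (N.deleteVerts {a, b} ⊔ G.subgraphOfAdj hca) := by
  have hcN : c ∉ (N.deleteVerts {a, b}).verts := fun h => hc h.1
  have haN : a ∉ (N.deleteVerts {a, b}).verts := fun h => h.2 (.inl rfl)
  refine ⟨(hN.1.deleteVerts_pair hab).sup_subgraphOfAdj hcN haN hca, fun N' hN' => ?_⟩
  rw [ncard_edgeSet_sup_subgraphOfAdj hcN hca, hN.1.edgeSet_deleteVerts_pair hab,
    Set.ncard_sdiff_singleton_add_one (N.mem_edgeSet.mpr hab)]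
  exact hN.2 N' hN'

lemma mem_Dset_of_adj (hN : IsMaximumMatching G N) {a b c : V} (hab : N.Adj a b)
    (hc : c ∉ N.verts) (hca : G.Adj c a) : b ∈ Dset G := by
  refine ⟨_, hN.exchange hab hc hca, ?_⟩
  have hbc : b ≠ c := fun h => hc (h ▸ hab.snd_mem)
  simp [hbc, hab.ne.symm]

theorem exists_notMem_verts_keeping_adj_off_Dset {M : G.Subgraph}
    (hM : IsMaximumMatching G M) (hN : IsMaximumMatching G N) {u : V} (huN : u ∉ N.verts) :
    ∃ Ms : G.Subgraph, IsMaximumMatching G Ms ∧ Ms ≤ M ⊔ N ∧ u ∉ Ms.verts ∧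
      ∀ ⦃w z⦄, M.Adj w z → w ∉ Dset G → z ∉ Dset G → Ms.Adj w z := by
  induction hn : (M.edgeSet \ N.edgeSet).ncard using Nat.strong_induction_on
    generalizing N u with | _ n ih =>
  by_cases huM : u ∉ M.verts
  · exact ⟨M, hM, le_sup_left, huM, fun w z h _ _ => h⟩
  rw [not_not] at huM
  obtain ⟨u₁, hu₁, -⟩ := hM.1 huM
  obtain ⟨u₂, hu₂, -⟩ := hN.1 (hN.mem_verts_of_adj huN hu₁.adj_sub)
  have hu₂u : u₂ ≠ u := fun h => huN (h ▸ hu₂.snd_mem)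
  -- Flip the alternating path `u u₁ u₂` of `M Δ N`: `N'` misses `u₂` and is closer to `M`.
  set N' := N.deleteVerts {u₁, u₂} ⊔ G.subgraphOfAdj hu₁.adj_sub
  have hN' : IsMaximumMatching G N' := hN.exchange hu₂ huN hu₁.adj_sub
  have hu₂N' : u₂ ∉ N'.verts := by simp [N', hu₂u, hu₂.ne.symm]
  have hN'le : N' ≤ M ⊔ N :=
    sup_le (deleteVerts_le.trans le_sup_right) ((subgraphOfAdj_le_of_adj M hu₁).trans le_sup_left)
  have hlt := hn ▸ hM.1.ncard_sdiff_edgeSet_exchange_lt hN.1 hu₁ hu₂ huN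
  obtain ⟨Ms, hMs, hMsle, hu₂Ms, hMs_adj⟩ := ih _ hlt hN' hu₂N' rfl
  replace hMsle : Ms ≤ M ⊔ N := hMsle.trans (sup_le le_sup_left hN'le)
  by_cases huMs : u ∉ Ms.verts
  · exact ⟨Ms, hMs, hMsle, huMs, hMs_adj⟩
  rw [not_not] at huMs
  obtain ⟨d, hd, -⟩ := hMs.1 huMs
  -- As `Ms ≤ M ⊔ N` and `u ∉ N`, the partner of `u` in `Ms` is `u₁`; flip back to free `u`.
  obtain rfl : d = u₁ := by
    rcases hMsle.2 hd with h | h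
    · exact hM.1.eq_of_adj_left h hu₁
    · exact absurd h.fst_mem huN
  refine ⟨_, hMs.exchange hd.symm hu₂Ms hu₂.adj_sub.symm,
    sup_le (deleteVerts_le.trans hMsle) ((subgraphOfAdj_le_of_adj N hu₂.symm).trans le_sup_right),
    by simp [hu₂u.symm, hu₁.ne], fun w z hwz hw hz => ?_⟩
  have hu : u ∈ Dset G := ⟨N, hN, huN⟩
  have hwu : w ≠ u := fun h => hw (h ▸ hu)
  have hzu : z ≠ u := fun h => hz (h ▸ hu)
  have hwd : w ≠ d := by rintro rfl; exact hzu (hM.1.eq_of_adj_left hwz hu₁.symm)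
  have hzd : z ≠ d := by rintro rfl; exact hwu (hM.1.eq_of_adj_right hwz hu₁)
  have hMs_wz := hMs_adj hwz hw hz
  simp [hMs_wz, hMs_wz.fst_mem, hMs_wz.snd_mem, hwd, hwu, hzd, hzu]

end IsMaximumMatching

end

/-- For every finite graph `G` and every maximum matching `M` of `G`, the
restriction of `M` to the subgraph induced on `C(G)` is a perfect matching of
that subgraph: every vertex of `C(G)` is matched by `M` to another vertex of
`C(G)`. -/
theorem gallaiEdmonds_C_perfectlyMatched {V : Type*} [Fintype V]
    (G : SimpleGraph V) (M : G.Subgraph) (hM : IsMaximumMatching G M) :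
    ∀ v ∈ Cset G, ∃ w ∈ Cset G, M.Adj v w := by
  intro v hv
  have hvD : v ∉ Dset G := fun h => hv (.inl h)
  have hvA : v ∉ Aset G := fun h => hv (.inr h)
  obtain ⟨w, hvw, -⟩ := hM.1 (not_not.mp fun h => hvD ⟨M, hM, h⟩)
  have hwD : w ∉ Dset G := fun h => hvA ⟨hvD, w, h, hvw.adj_sub⟩
  refine ⟨w, ?_, hvw⟩
  rintro (hw | ⟨-, u, ⟨N, hN, huN⟩, hwu⟩)
  · exact hwD hw
  obtain ⟨Ms, hMs, -, huMs, hMs_adj⟩ := hM.exists_notMem_verts_keeping_adj_off_Dset hN huN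
  exact hvD (hMs.mem_Dset_of_adj (hMs_adj hvw.symm hwD hvD) huMs hwu.symm)
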